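/- Let μ ∈ ℝ, σ > 0, q > 0, δ > 0 and fix z > 0. Let w : [0,∞) → ℝ be the closed-form refracted scale function of the linear Brownian motion model, w(x) = (σ²/2) W^{(q)′}(z) 𝕎^{(q)}(x) + (W^{(q)}(z)/ρ^Y)(ρ₁^Y e^{ρ₂^Y x} + ρ₂^Y e^{−ρ₁^Y x}). Then there exists a constant a* ≥ 0 such that the derivative w′ is decreasing on (0, a*) and increasing on (a*, ∞). -/

import Mathlib

open Real

/- Linear Brownian motion model: X_t = μt + σB_t, Y_t = X_t − δt.  The closed
   form of the refracted scale function w^{(q)}(x;−z) and the convexity-type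
   property of its derivative: it decreases on (0,a*) and increases on (a*,∞)
   for some a* ≥ 0. -/

noncomputable def rho1 (μ σ q : ℝ) : ℝ := (Real.sqrt (μ ^ 2 + 2 * q * σ ^ 2) + μ) / σ ^ 2

noncomputable def rho2 (μ σ q : ℝ) : ℝ := (Real.sqrt (μ ^ 2 + 2 * q * σ ^ 2) - μ) / σ ^ 2

noncomputable def rho (μ σ q : ℝ) : ℝ := rho1 μ σ q + rho2 μ σ q

noncomputable def rho1Y (μ σ q δ : ℝ) : ℝ := rho1 (μ - δ) σ q

noncomputable def rho2Y (μ σ q δ : ℝ) : ℝ := rho2 (μ - δ) σ q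

noncomputable def rhoY (μ σ q δ : ℝ) : ℝ := rho1Y μ σ q δ + rho2Y μ σ q δ

/-- The q-scale function W^{(q)} of X (its formula on [0,∞)). -/
noncomputable def Wq (μ σ q x : ℝ) : ℝ :=
  2 / (σ ^ 2 * rho μ σ q) *
    (Real.exp (rho2 μ σ q * x) - Real.exp (-(rho1 μ σ q) * x))

/-- The q-scale function 𝕎^{(q)} of Y (its formula on [0,∞)). -/
noncomputable def WWq (μ σ q δ x : ℝ) : ℝ := Wq (μ - δ) σ q x

/-- The closed-form refracted scale function x ↦ w^{(q)}(x;−z). -/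
noncomputable def wq (μ σ q δ z x : ℝ) : ℝ :=
  σ ^ 2 / 2 * deriv (Wq μ σ q) z * WWq μ σ q δ x +
    Wq μ σ q z / rhoY μ σ q δ *
      (rho1Y μ σ q δ * Real.exp (rho2Y μ σ q δ * x) +
        rho2Y μ σ q δ * Real.exp (-(rho1Y μ σ q δ) * x))

lemma my_hasDerivAt_exp_mul (c x : ℝ) :
    HasDerivAt (fun y => Real.exp (c * y)) (c * Real.exp (c * x)) x := by
  have h := (Real.hasDerivAt_exp (c * x)).comp x ((hasDerivAt_id x).const_mul c)
  simpa [mul_comm, Function.comp_def] using h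

lemma my_sqrt_gt_abs (μ σ q : ℝ) (hσ : 0 < σ) (hq : 0 < q) :
    |μ| < Real.sqrt (μ ^ 2 + 2 * q * σ ^ 2) := by
  have h : μ ^ 2 < μ ^ 2 + 2 * q * σ ^ 2 := by nlinarith [mul_pos hq (pow_pos hσ 2)]
  calc |μ| = Real.sqrt (μ ^ 2) := by rw [Real.sqrt_sq_eq_abs]
    _ < _ := Real.sqrt_lt_sqrt (sq_nonneg μ) h

lemma my_rho1_pos (μ σ q : ℝ) (hσ : 0 < σ) (hq : 0 < q) : 0 < rho1 μ σ q := by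
  have h := my_sqrt_gt_abs μ σ q hσ hq
  have h2 := neg_abs_le μ
  exact div_pos (by linarith) (by positivity)

lemma my_rho2_pos (μ σ q : ℝ) (hσ : 0 < σ) (hq : 0 < q) : 0 < rho2 μ σ q := by
  have h := my_sqrt_gt_abs μ σ q hσ hq
  have h2 := le_abs_self μ
  exact div_pos (by linarith) (by positivity)

lemma my_deriv_Wq (μ σ q z : ℝ) :
    HasDerivAt (Wq μ σ q)
      (2 / (σ ^ 2 * rho μ σ q) *
        (rho2 μ σ q * Real.exp (rho2 μ σ q * z) + rho1 μ σ q * Real.exp (-(rho1 μ σ q) * z))) z := by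
  have h1 := my_hasDerivAt_exp_mul (rho2 μ σ q) z
  have h2 := my_hasDerivAt_exp_mul (-(rho1 μ σ q)) z
  have h := (h1.sub h2).const_mul (2 / (σ ^ 2 * rho μ σ q))
  refine h.congr_deriv ?_
  ring

lemma my_Wq_pos (μ σ q z : ℝ) (hσ : 0 < σ) (hq : 0 < q) (hz : 0 < z) :
    0 < Wq μ σ q z := by
  have h1 := my_rho1_pos μ σ q hσ hq
  have h2 := my_rho2_pos μ σ q hσ hq
  have hρ : 0 < rho μ σ q := by rw [rho]; linarith
  have he : Real.exp (-(rho1 μ σ q) * z) < Real.exp (rho2 μ σ q * z) := by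
    apply Real.exp_lt_exp.2; nlinarith
  apply mul_pos (by positivity); linarith

lemma my_derivWq_pos (μ σ q z : ℝ) (hσ : 0 < σ) (hq : 0 < q) :
    0 < deriv (Wq μ σ q) z := by
  rw [(my_deriv_Wq μ σ q z).deriv]
  have h1 := my_rho1_pos μ σ q hσ hq
  have h2 := my_rho2_pos μ σ q hσ hq
  have hρ : 0 < rho μ σ q := by rw [rho]; linarith
  have e1 := Real.exp_pos (rho2 μ σ q * z)
  have e2 := Real.exp_pos (-(rho1 μ σ q) * z)
  positivity

lemma my_key (C D p m : ℝ) (hC : 0 < C) (hp : 0 < p) (hm : 0 < m) :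
    ∃ a : ℝ, 0 ≤ a ∧
      StrictAntiOn (fun x => C * Real.exp (p * x) + D * Real.exp (-m * x)) (Set.Ioo 0 a) ∧
      StrictMonoOn (fun x => C * Real.exp (p * x) + D * Real.exp (-m * x)) (Set.Ioi a) := by
  set g : ℝ → ℝ := fun x => C * Real.exp (p * x) + D * Real.exp (-m * x) with hg
  have hd : ∀ x, HasDerivAt g (C * p * Real.exp (p * x) - D * m * Real.exp (-m * x)) x := by
    intro x
    have h1 := (my_hasDerivAt_exp_mul p x).const_mul C
    have h2 := (my_hasDerivAt_exp_mul (-m) x).const_mul D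
    refine (h1.add h2).congr_deriv ?_
    ring
  have hderiv : ∀ x, deriv g x = C * p * Real.exp (p * x) - D * m * Real.exp (-m * x) :=
    fun x => (hd x).deriv
  have hcont : Continuous g := by fun_prop
  by_cases hD : D * m ≤ 0
  · refine ⟨0, le_refl 0, ?_, ?_⟩
    · intro x hx; exact absurd (hx.1.trans hx.2) (lt_irrefl 0)
    · apply strictMonoOn_of_deriv_pos (convex_Ioi 0) hcont.continuousOn
      intro x _
      rw [hderiv]
      have e1 := Real.exp_pos (p * x)
      have e2 := Real.exp_pos (-m * x)
      have h3 : D * m * Real.exp (-m * x) ≤ 0 := mul_nonpos_of_nonpos_of_nonneg hD e2.le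
      nlinarith [mul_pos (mul_pos hC hp) e1]
  · push_neg at hD
    have hDpos : 0 < D := by nlinarith
    have hpm : 0 < p + m := by linarith
    set t : ℝ := (Real.log (D * m) - Real.log (C * p)) / (p + m) with ht
    have hCp : 0 < C * p := mul_pos hC hp
    have hrw : ∀ x, deriv g x =
        Real.exp (Real.log (C * p) + p * x) - Real.exp (Real.log (D * m) + -m * x) := by
      intro x
      rw [hderiv, Real.exp_add, Real.exp_add, Real.exp_log hCp, Real.exp_log hD]
    have hlt : ∀ x, deriv g x < 0 ↔ x < t := by
      intro x
      rw [hrw, sub_neg, Real.exp_lt_exp, ht, lt_div_iff₀ hpm]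
      constructor <;> intro h <;> nlinarith
    have hgt : ∀ x, 0 < deriv g x ↔ t < x := by
      intro x
      rw [hrw, sub_pos, Real.exp_lt_exp, ht, div_lt_iff₀ hpm]
      constructor <;> intro h <;> nlinarith
    refine ⟨max 0 t, le_max_left 0 t, ?_, ?_⟩
    · apply strictAntiOn_of_deriv_neg (convex_Ioo 0 (max 0 t)) hcont.continuousOn
      rw [interior_Ioo]
      intro x hx
      rw [hlt]
      rcases le_or_gt t 0 with h | h
      · rw [max_eq_left h] at hx
        exact absurd (hx.1.trans hx.2) (lt_irrefl 0)
      · have : max 0 t = t := max_eq_right h.le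
        rw [this] at hx; exact hx.2
    · apply strictMonoOn_of_deriv_pos (convex_Ioi (max 0 t)) hcont.continuousOn
      rw [interior_Ioi]
      intro x hx
      rw [hgt]
      exact lt_of_le_of_lt (le_max_right 0 t) hx

lemma my_wq_eq (μ σ q δ z : ℝ) (hσ : 0 < σ) (hq : 0 < q) :
    wq μ σ q δ z = fun x =>
      ((deriv (Wq μ σ q) z + rho1Y μ σ q δ * Wq μ σ q z) /
          (rho1Y μ σ q δ + rho2Y μ σ q δ)) * Real.exp (rho2Y μ σ q δ * x) +
      ((rho2Y μ σ q δ * Wq μ σ q z - deriv (Wq μ σ q) z) /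
          (rho1Y μ σ q δ + rho2Y μ σ q δ)) * Real.exp (-(rho1Y μ σ q δ) * x) := by
  have hr1p := my_rho1_pos (μ - δ) σ q hσ hq
  have hr2p := my_rho2_pos (μ - δ) σ q hσ hq
  have hs : rho1 (μ - δ) σ q + rho2 (μ - δ) σ q ≠ 0 := by positivity
  have hρ1 := my_rho1_pos μ σ q hσ hq
  have hρ2 := my_rho2_pos μ σ q hσ hq
  have hρ : rho1 μ σ q + rho2 μ σ q ≠ 0 := by positivity
  have hσ2 : (σ : ℝ) ^ 2 ≠ 0 := by positivity
  funext x
  simp only [wq, WWq, Wq, rhoY, rho1Y, rho2Y, rho]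
  field_simp
  ring

theorem wq_deriv_decreasing_then_increasing_brownian (μ σ q δ z : ℝ)
    (hσ : 0 < σ) (hq : 0 < q) (hδ : 0 < δ) (hz : 0 < z) :
    ∃ a : ℝ, 0 ≤ a ∧
      StrictAntiOn (deriv (wq μ σ q δ z)) (Set.Ioo 0 a) ∧
      StrictMonoOn (deriv (wq μ σ q δ z)) (Set.Ioi a) := by
  have hr1p : 0 < rho1Y μ σ q δ := my_rho1_pos (μ - δ) σ q hσ hq
  have hr2p : 0 < rho2Y μ σ q δ := my_rho2_pos (μ - δ) σ q hσ hq
  have hWzp : 0 < Wq μ σ q z := my_Wq_pos μ σ q z hσ hq hz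
  have hWz'p : 0 < deriv (Wq μ σ q) z := my_derivWq_pos μ σ q z hσ hq
  have hs : (0 : ℝ) < rho1Y μ σ q δ + rho2Y μ σ q δ := by linarith
  have hW : ∀ x, HasDerivAt (wq μ σ q δ z)
      ((rho2Y μ σ q δ * (deriv (Wq μ σ q) z + rho1Y μ σ q δ * Wq μ σ q z) /
          (rho1Y μ σ q δ + rho2Y μ σ q δ)) * Real.exp (rho2Y μ σ q δ * x) +
        (rho1Y μ σ q δ * (deriv (Wq μ σ q) z - rho2Y μ σ q δ * Wq μ σ q z) /
          (rho1Y μ σ q δ + rho2Y μ σ q δ)) * Real.exp (-(rho1Y μ σ q δ) * x)) x := by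
    intro x
    rw [my_wq_eq μ σ q δ z hσ hq]
    have h1 := (my_hasDerivAt_exp_mul (rho2Y μ σ q δ) x).const_mul
      ((deriv (Wq μ σ q) z + rho1Y μ σ q δ * Wq μ σ q z) /
          (rho1Y μ σ q δ + rho2Y μ σ q δ))
    have h2 := (my_hasDerivAt_exp_mul (-(rho1Y μ σ q δ)) x).const_mul
      ((rho2Y μ σ q δ * Wq μ σ q z - deriv (Wq μ σ q) z) /
          (rho1Y μ σ q δ + rho2Y μ σ q δ))
    refine (h1.add h2).congr_deriv ?_
    field_simp
    ring
  have hEq : deriv (wq μ σ q δ z) = fun x =>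
      (rho2Y μ σ q δ * (deriv (Wq μ σ q) z + rho1Y μ σ q δ * Wq μ σ q z) /
          (rho1Y μ σ q δ + rho2Y μ σ q δ)) * Real.exp (rho2Y μ σ q δ * x) +
        (rho1Y μ σ q δ * (deriv (Wq μ σ q) z - rho2Y μ σ q δ * Wq μ σ q z) /
          (rho1Y μ σ q δ + rho2Y μ σ q δ)) * Real.exp (-(rho1Y μ σ q δ) * x) :=
    funext fun x => (hW x).deriv
  have hCc : 0 < rho2Y μ σ q δ * (deriv (Wq μ σ q) z + rho1Y μ σ q δ * Wq μ σ q z) /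
      (rho1Y μ σ q δ + rho2Y μ σ q δ) := by
    apply div_pos _ hs
    apply mul_pos hr2p
    nlinarith
  rw [hEq]
  exact my_key _ _ _ _ hCc hr2p hr1p
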